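/- arXiv:1409.1288 — 2 statements merged into one kernel-verified Lean document; each statement's English description precedes it below -/
import Mathlib

section
/- Under the standing assumptions, the value function V(k₀) := sup_{c ∈ Λ(k₀)} U(c;k₀) is finite for every k₀ ≥ 0, and satisfies V(k₀) ≥ u(F(k₀))/ρ; in particular lim_{k→∞} V(k) = +∞. -/
open MeasureTheory

noncomputable section

/-- `k` is the trajectory starting at `k₀` driven by control `c` and production `F`. -/
def SolOn (F : ℝ → ℝ) (k₀ : ℝ) (c k : ℝ → ℝ) : Prop :=
  ContinuousOn k (Set.Ici 0) ∧ k 0 = k₀ ∧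
    ∀ t ≥ (0:ℝ), k t = k₀ + ∫ s in (0:ℝ)..t, (F (k s) - c s)

/-- `c` is an admissible control at initial capital `k₀`. -/
def Adm (F : ℝ → ℝ) (k₀ : ℝ) (c : ℝ → ℝ) : Prop :=
  LocallyIntegrableOn c (Set.Ici 0) ∧
  (∀ᵐ t ∂(volume.restrict (Set.Ici 0)), 0 ≤ c t) ∧
  ∃ k, SolOn F k₀ c k ∧ ∀ t ≥ (0:ℝ), 0 ≤ k t

/-- Intertemporal utility functional. -/
def Util (ρ : ℝ) (u c : ℝ → ℝ) : ℝ :=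
  ∫ t in Set.Ioi (0:ℝ), Real.exp (-ρ * t) * u (c t)

/-- Value function. -/
def Val (F : ℝ → ℝ) (ρ : ℝ) (u : ℝ → ℝ) (k₀ : ℝ) : ℝ :=
  sSup {x | ∃ c, Adm F k₀ c ∧ Util ρ u c = x}

open Real Set Filter
open scoped ENNReal Topology

/-!
Along an admissible path, `k' = F k - c ≤ (L + ε₀) k + Mh` and `k ≥ 0`, so by Grönwall the
cumulative consumption satisfies `∫₀ᵗ c ≤ B e^{(L+ε₀) t}` with `B` depending only on `k₀`.
Concavity of `u` with `u 0 = 0` gives `u y ≤ u Y (1 + y / Y)` for `Y = e^{(L+ε₀) t}`, and the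
integrability condition makes `e^{-ρ t} u Y = O(e^{-ε₀ t})`. Hence the discounted utility collected
on `(n, n + 1]` is `O(e^{-ε₀ n})` uniformly in the control, and summing the geometric series bounds
`U(c; k₀)`. The constant control `F k₀` yields `u (F k₀) / ρ`, which tends to infinity with `k₀`.
-/

theorem Monotone.intervalIntegrable_comp {G k : ℝ → ℝ} (hG : Monotone G) (hk : Continuous k)
    (a b : ℝ) : IntervalIntegrable (fun s => G (k s)) volume a b := by
  obtain ⟨m, -, hm⟩ := isCompact_uIcc.exists_isMinOn nonempty_uIcc hk.continuousOn
  obtain ⟨M, -, hM⟩ := isCompact_uIcc.exists_isMaxOn nonempty_uIcc hk.continuousOn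
  refine IntegrableOn.intervalIntegrable (IntegrableOn.of_bound measure_Icc_lt_top
    (hG.measurable.comp hk.measurable).aestronglyMeasurable (max |G (k m)| |G (k M)|) ?_)
  filter_upwards [ae_restrict_mem measurableSet_Icc] with s hs
  exact abs_le_max_abs_abs (hG (hm hs)) (hG (hM hs))

theorem gronwallBound_le_mul_exp {δ K ε : ℝ} (hK : 0 < K) (hε : 0 ≤ ε) (x : ℝ) :
    gronwallBound δ K ε x ≤ (δ + ε / K) * exp (K * x) := by
  rw [gronwallBound_of_K_ne_0 hK.ne']
  have : 0 ≤ ε / K := div_nonneg hε hK.le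
  nlinarith

theorem add_integral_le_gronwallBound {f : ℝ → ℝ} {δ K ε t : ℝ} (hf : Continuous f) (hK : 0 ≤ K)
    (ht : 0 ≤ t) (hle : ∀ x ∈ Ico 0 t, f x ≤ δ + ∫ s in (0:ℝ)..x, (K * f s + ε)) :
    δ + ∫ s in (0:ℝ)..t, (K * f s + ε) ≤ gronwallBound δ K ε t := by
  set Φ : ℝ → ℝ := fun x => δ + ∫ s in (0:ℝ)..x, (K * f s + ε)
  have hΦ : ∀ x, HasDerivAt Φ (K * f x + ε) x := fun x =>
    ((by fun_prop : Continuous fun s => K * f s + ε).integral_hasStrictDerivAt 0 x).hasDerivAt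
      |>.const_add δ
  have := le_gronwallBound_of_liminf_deriv_right_le (f := Φ) (δ := δ) (K := K) (ε := ε)
    (fun x _ => (hΦ x).continuousAt.continuousWithinAt)
    (fun x _ r hr => (hΦ x).hasDerivWithinAt.liminf_right_slope_le hr)
    (by simp [Φ]) (fun x hx => by gcongr; exact hle x hx) t ⟨ht, le_rfl⟩
  simpa using this

theorem ConcaveOn.le_add_div_mul {u : ℝ → ℝ} (hconc : ConcaveOn ℝ (Ici 0) u)
    (hmono : MonotoneOn u (Ici 0)) (hu0 : u 0 = 0) {Y y : ℝ} (hY : 0 < Y) (hy : 0 ≤ y) :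
    u y ≤ u Y + u Y / Y * y := by
  have huY : 0 ≤ u Y := hu0 ▸ hmono self_mem_Ici hY.le hY.le
  rcases le_or_gt y Y with hyY | hYy
  · have := hmono hy hY.le hyY
    have : 0 ≤ u Y / Y * y := by positivity
    linarith
  · have hslope := hconc.antitoneOn_slope_gt self_mem_Ici ⟨hY.le, hY⟩ ⟨hy, hY.trans hYy⟩ hYy.le
    simp only [slope_def_field, hu0, sub_zero] at hslope
    have := (div_le_iff₀ (hY.trans hYy)).mp hslope
    linarith

-- No integrability is assumed: a non-integrable `f` has Bochner integral `0 ≤ M`.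
theorem integral_le_of_lintegral_ofReal_le {α : Type*} [MeasurableSpace α] {μ : Measure α}
    {f : α → ℝ} {M : ℝ} (hf : 0 ≤ᵐ[μ] f) (hM : 0 ≤ M)
    (h : ∫⁻ x, ENNReal.ofReal (f x) ∂μ ≤ ENNReal.ofReal M) : ∫ x, f x ∂μ ≤ M := by
  have hnorm : ∫⁻ x, ENNReal.ofReal ‖f x‖ ∂μ = ∫⁻ x, ENNReal.ofReal (f x) ∂μ :=
    lintegral_congr_ae (by filter_upwards [hf] with x hx using by rw [Real.norm_of_nonneg hx])
  calc ∫ x, f x ∂μ ≤ ‖∫ x, f x ∂μ‖ := le_abs_self _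
    _ ≤ (∫⁻ x, ENNReal.ofReal ‖f x‖ ∂μ).toReal := norm_integral_le_lintegral_norm f
    _ ≤ M := by
      rw [hnorm]
      exact ENNReal.toReal_le_of_le_ofReal hM h

theorem lintegral_ofReal_le_of_le_add_mul {α : Type*} [MeasurableSpace α] {μ : Measure α}
    {f c : α → ℝ} {s : Set α} {a b M : ℝ} (hs : μ s = 1) (ha : 0 ≤ a) (hb : 0 ≤ b)
    (hc : IntegrableOn c s μ) (hc0 : ∀ᵐ x ∂μ.restrict s, 0 ≤ c x)
    (hcM : ∫ x in s, c x ∂μ ≤ M) (hf : ∀ᵐ x ∂μ.restrict s, f x ≤ a + b * c x) :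
    ∫⁻ x in s, ENNReal.ofReal (f x) ∂μ ≤ ENNReal.ofReal (a + b * M) := by
  have hconst : IntegrableOn (fun _ => a) s μ := integrableOn_const (by simp [hs])
  calc ∫⁻ x in s, ENNReal.ofReal (f x) ∂μ
      ≤ ∫⁻ x in s, ENNReal.ofReal (a + b * c x) ∂μ :=
        lintegral_mono_ae (hf.mono fun x hx => ENNReal.ofReal_le_ofReal hx)
    _ = ENNReal.ofReal (∫ x in s, (a + b * c x) ∂μ) := by
        refine (ofReal_integral_eq_lintegral_ofReal (hconst.add (hc.const_mul b)) ?_).symm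
        filter_upwards [hc0] with x hx
        exact add_nonneg ha (mul_nonneg hb hx)
    _ = ENNReal.ofReal (a + b * ∫ x in s, c x ∂μ) := by
        rw [integral_add hconst (hc.const_mul b), setIntegral_const, integral_const_mul]
        simp [measureReal_def, hs]
    _ ≤ ENNReal.ofReal (a + b * M) := ENNReal.ofReal_le_ofReal (by gcongr)

theorem iUnion_Ioc_natCast : ⋃ n : ℕ, Ioc (n : ℝ) (n + 1) = Ioi 0 := by
  ext t
  simp only [mem_iUnion, mem_Ioc, mem_Ioi]
  refine ⟨fun ⟨n, hn, _⟩ => (Nat.cast_nonneg n).trans_lt hn, fun ht => ⟨⌈t⌉₊ - 1, ?_, ?_⟩⟩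
  · have := Nat.ceil_lt_add_one ht.le
    have : 1 ≤ ⌈t⌉₊ := Nat.one_le_ceil_iff.mpr ht
    push_cast [Nat.cast_sub this]
    linarith
  · have : 1 ≤ ⌈t⌉₊ := Nat.one_le_ceil_iff.mpr ht
    push_cast [Nat.cast_sub this]
    linarith [Nat.le_ceil t]

theorem pairwise_disjoint_Ioc_natCast :
    Pairwise (Function.onFun Disjoint fun n : ℕ => Ioc (n : ℝ) (n + 1)) := by
  intro m n hmn
  simpa using pairwise_disjoint_Ioc_intCast ℝ (Nat.cast_injective.ne hmn : (m : ℤ) ≠ n)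

theorem lintegral_Ioi_zero_eq_tsum_Ioc (f : ℝ → ℝ≥0∞) :
    ∫⁻ t in Ioi 0, f t = ∑' n : ℕ, ∫⁻ t in Ioc (n : ℝ) (n + 1), f t := by
  rw [← iUnion_Ioc_natCast, lintegral_iUnion (fun _ => measurableSet_Ioc)
    pairwise_disjoint_Ioc_natCast]

section DiscountedBound

variable {f c : ℝ → ℝ} {A B C ε : ℝ}

-- On `(n, n + 1]` the weight `exp (-A t)` absorbs the growth `B exp (A (n + 1))` of the
-- cumulative `c`, leaving the factor `exp (-ε n)`.
theorem lintegral_Ioc_ofReal_le_geometric (hA : 0 ≤ A) (hε : 0 ≤ ε) (hC : 0 ≤ C)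
    (hcint : LocallyIntegrableOn c (Ici 0)) (hc0 : ∀ᵐ t ∂volume.restrict (Ici 0), 0 ≤ c t)
    (hcB : ∀ t ≥ (0:ℝ), ∫ s in (0:ℝ)..t, c s ≤ B * exp (A * t))
    (hf : ∀ t > (0:ℝ), 0 ≤ c t → f t ≤ C * exp (-ε * t) * (1 + exp (-A * t) * c t)) (n : ℕ) :
    ∫⁻ t in Ioc (n : ℝ) (n + 1), ENNReal.ofReal (f t) ≤
      ENNReal.ofReal (C * (1 + B * exp A) * exp (-ε) ^ n) := by
  have hn : (0:ℝ) ≤ n := Nat.cast_nonneg n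
  have hsub : Ioc (n : ℝ) (n + 1) ⊆ Ioc 0 (n + 1) := Ioc_subset_Ioc_left hn
  have hcI : IntegrableOn c (Ioc 0 ((n : ℝ) + 1)) :=
    (hcint.integrableOn_compact_subset Icc_subset_Ici_self isCompact_Icc).mono_set
      Ioc_subset_Icc_self
  have hc0' : ∀ᵐ t ∂volume.restrict (Ioc 0 ((n : ℝ) + 1)), 0 ≤ c t :=
    ae_restrict_of_ae_restrict_of_subset (Ioc_subset_Icc_self.trans Icc_subset_Ici_self) hc0
  have hpt : ∀ᵐ t ∂volume.restrict (Ioc (n : ℝ) (n + 1)),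
      f t ≤ C * exp (-ε * n) + C * exp (-ε * n) * exp (-A * n) * c t := by
    filter_upwards [ae_restrict_of_ae_restrict_of_subset hsub hc0',
      ae_restrict_mem measurableSet_Ioc] with t hct ht
    have hεt : exp (-ε * t) ≤ exp (-ε * n) := exp_le_exp.mpr (by nlinarith [ht.1])
    have hAt : exp (-A * t) ≤ exp (-A * n) := exp_le_exp.mpr (by nlinarith [ht.1])
    calc f t ≤ C * exp (-ε * t) * (1 + exp (-A * t) * c t) := hf t (hn.trans_lt ht.1) hct
      _ ≤ C * exp (-ε * n) * (1 + exp (-A * n) * c t) := by gcongr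
      _ = C * exp (-ε * n) + C * exp (-ε * n) * exp (-A * n) * c t := by ring
  have hmass : ∫ t in Ioc (n : ℝ) (n + 1), c t ≤ B * exp (A * (n + 1)) :=
    calc ∫ t in Ioc (n : ℝ) (n + 1), c t ≤ ∫ t in Ioc 0 ((n : ℝ) + 1), c t :=
          setIntegral_mono_set hcI hc0' hsub.eventuallyLE
      _ = ∫ t in (0:ℝ)..n + 1, c t := (intervalIntegral.integral_of_le (by positivity)).symm
      _ ≤ B * exp (A * (n + 1)) := hcB _ (by positivity)
  refine (lintegral_ofReal_le_of_le_add_mul (by simp) (by positivity) (by positivity)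
    (hcI.mono_set hsub) (ae_restrict_of_ae_restrict_of_subset hsub hc0') hmass hpt).trans_eq ?_
  have hexpA : exp (-A * n) * exp (A * (n + 1)) = exp A := by rw [← exp_add]; ring_nf
  have hexpε : exp (-ε) ^ n = exp (-ε * n) := by rw [← exp_nat_mul]; ring_nf
  rw [hexpε]
  congr 1
  linear_combination C * exp (-ε * n) * B * hexpA

theorem lintegral_Ioi_ofReal_le_of_exp_growth (hA : 0 ≤ A) (hε : 0 < ε) (hC : 0 ≤ C)
    (hcint : LocallyIntegrableOn c (Ici 0)) (hc0 : ∀ᵐ t ∂volume.restrict (Ici 0), 0 ≤ c t)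
    (hcB : ∀ t ≥ (0:ℝ), ∫ s in (0:ℝ)..t, c s ≤ B * exp (A * t))
    (hf : ∀ t > (0:ℝ), 0 ≤ c t → f t ≤ C * exp (-ε * t) * (1 + exp (-A * t) * c t)) :
    ∫⁻ t in Ioi 0, ENNReal.ofReal (f t) ≤
      ENNReal.ofReal (C * (1 + B * exp A) / (1 - exp (-ε))) := by
  have hB : 0 ≤ B := by simpa using hcB 0 le_rfl
  have hr0 : 0 ≤ exp (-ε) := (exp_pos _).le
  have hr1 : exp (-ε) < 1 := exp_lt_one_iff.mpr (neg_lt_zero.mpr hε)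
  rw [lintegral_Ioi_zero_eq_tsum_Ioc]
  calc ∑' n : ℕ, ∫⁻ t in Ioc (n : ℝ) (n + 1), ENNReal.ofReal (f t)
      ≤ ∑' n : ℕ, ENNReal.ofReal (C * (1 + B * exp A) * exp (-ε) ^ n) :=
        ENNReal.tsum_le_tsum (lintegral_Ioc_ofReal_le_geometric hA hε.le hC hcint hc0 hcB hf)
    _ = ENNReal.ofReal (∑' n : ℕ, C * (1 + B * exp A) * exp (-ε) ^ n) :=
        (ENNReal.ofReal_tsum_of_nonneg (fun n => by positivity)
          ((summable_geometric_of_lt_one hr0 hr1).mul_left _)).symm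
    _ = ENNReal.ofReal (C * (1 + B * exp A) / (1 - exp (-ε))) := by
        rw [tsum_mul_left, tsum_geometric_of_lt_one hr0 hr1, div_eq_mul_inv]

end DiscountedBound

theorem exists_discounted_utility_le {u : ℝ → ℝ} {ρ ε A : ℝ} (hρ : 0 ≤ ρ) (hε : 0 ≤ ε)
    (hA : 0 ≤ A) (hmono : MonotoneOn u (Ici 0)) (hu_nonneg : ∀ x ≥ (0:ℝ), 0 ≤ u x)
    (hlim : Tendsto (fun t => exp (ε * t) * exp (-ρ * t) * u (exp (A * t))) atTop (𝓝 0)) :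
    ∃ C, 0 ≤ C ∧ ∀ t ≥ (0:ℝ), exp (ε * t) * exp (-ρ * t) * u (exp (A * t)) ≤ C := by
  obtain ⟨T, hT⟩ := eventually_atTop.mp (hlim.eventually (eventually_le_nhds zero_lt_one))
  refine ⟨max 1 (exp (ε * T) * u (exp (A * T))), zero_le_one.trans (le_max_left _ _),
    fun t ht => ?_⟩
  rcases le_total T t with hTt | htT
  · exact (hT t hTt).trans (le_max_left _ _)
  · refine le_trans ?_ (le_max_right _ _)
    have hdisc : exp (-ρ * t) ≤ 1 := exp_le_one_iff.mpr (by nlinarith)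
    have hu : u (exp (A * t)) ≤ u (exp (A * T)) :=
      hmono (exp_pos _).le (exp_pos _).le (by gcongr)
    calc exp (ε * t) * exp (-ρ * t) * u (exp (A * t))
        ≤ exp (ε * T) * 1 * u (exp (A * T)) := by
          gcongr
          exact hu_nonneg _ (exp_pos _).le
      _ = exp (ε * T) * u (exp (A * T)) := by ring

theorem integral_le_gronwallBound_of_adm {F c : ℝ → ℝ} {a Mh k₀ t : ℝ} (ha : 0 ≤ a)
    (hFmono : MonotoneOn F (Ici 0)) (hFsub : ∀ x ≥ (0:ℝ), F x ≤ a * x + Mh)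
    (hc : Adm F k₀ c) (ht : 0 ≤ t) :
    ∫ s in (0:ℝ)..t, c s ≤ gronwallBound k₀ a Mh t := by
  obtain ⟨hcint, hc0, k, ⟨hkc, -, hkeq⟩, hkpos⟩ := hc
  -- `k` is only continuous on `[0, ∞)`; extend it to `ℝ` to apply `add_integral_le_gronwallBound`
  set K : ℝ → ℝ := fun s => k (max s 0) with hK_def
  have hK : Continuous K :=
    hkc.comp_continuous (continuous_id.max continuous_const) fun s => le_max_right s 0
  have hKk : ∀ s ≥ (0:ℝ), K s = k s := fun s hs => by simp [hK_def, max_eq_left hs]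
  have hKpos : ∀ s, 0 ≤ K s := fun s => hkpos _ (le_max_right s 0)
  have budget : ∀ x ≥ (0:ℝ), k x + ∫ s in (0:ℝ)..x, c s ≤ k₀ + ∫ s in (0:ℝ)..x, (a * K s + Mh) := by
    intro x hx
    have hcI : IntervalIntegrable c volume 0 x :=
      (intervalIntegrable_iff_integrableOn_Ioc_of_le hx).mpr
        ((hcint.integrableOn_compact_subset Icc_subset_Ici_self isCompact_Icc).mono_set
          Ioc_subset_Icc_self)
    have hFK : IntervalIntegrable (fun s => F (K s)) volume 0 x := by
      simpa only [max_eq_left (hKpos _)] using Monotone.intervalIntegrable_comp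
        (fun y z hyz => hFmono (le_max_right y 0) (le_max_right z 0) (max_le_max_right 0 hyz))
        hK 0 x
    have hsol : k x = k₀ + ((∫ s in (0:ℝ)..x, F (K s)) - ∫ s in (0:ℝ)..x, c s) := by
      rw [hkeq x hx, ← intervalIntegral.integral_sub hFK hcI]
      refine congrArg _ (intervalIntegral.integral_congr fun s hs => ?_)
      rw [uIcc_of_le hx] at hs
      simp only [hKk s hs.1]
    have hprod : ∫ s in (0:ℝ)..x, F (K s) ≤ ∫ s in (0:ℝ)..x, (a * K s + Mh) :=
      intervalIntegral.integral_mono_on hx hFK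
        ((by fun_prop : Continuous fun s => a * K s + Mh).intervalIntegrable _ _)
        fun s _ => hFsub _ (hKpos s)
    linarith
  have hc_nonneg : ∀ x ≥ (0:ℝ), 0 ≤ ∫ s in (0:ℝ)..x, c s := fun x hx =>
    intervalIntegral.integral_nonneg_of_ae_restrict hx
      (ae_restrict_of_ae_restrict_of_subset Icc_subset_Ici_self hc0)
  have hgron := add_integral_le_gronwallBound (δ := k₀) (ε := Mh) hK ha ht fun x hx => by
    linarith [budget x hx.1, hc_nonneg x hx.1, hKk x hx.1]
  linarith [budget t ht, hkpos t ht]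

theorem util_le_of_adm {F u c : ℝ → ℝ} {ρ A ε Mh k₀ C : ℝ} (hA : 0 < A) (hε : 0 < ε)
    (hMh : 0 ≤ Mh) (hC : 0 ≤ C) (hFmono : MonotoneOn F (Ici 0))
    (hFsub : ∀ x ≥ (0:ℝ), F x ≤ A * x + Mh) (huconc : ConcaveOn ℝ (Ici 0) u)
    (humono : MonotoneOn u (Ici 0)) (hu0 : u 0 = 0)
    (hubound : ∀ t ≥ (0:ℝ), exp (ε * t) * exp (-ρ * t) * u (exp (A * t)) ≤ C)
    (hc : Adm F k₀ c) :
    Util ρ u c ≤ C * (1 + (k₀ + Mh / A) * exp A) / (1 - exp (-ε)) := by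
  have hu_nonneg : ∀ x ≥ (0:ℝ), 0 ≤ u x := fun x hx => hu0 ▸ humono self_mem_Ici hx hx
  have hk₀ : 0 ≤ k₀ := by
    obtain ⟨-, -, k, ⟨-, hk0, -⟩, hkpos⟩ := hc
    exact hk0 ▸ hkpos 0 le_rfl
  have hcB : ∀ t ≥ (0:ℝ), ∫ s in (0:ℝ)..t, c s ≤ (k₀ + Mh / A) * exp (A * t) := fun t ht =>
    (integral_le_gronwallBound_of_adm hA.le hFmono hFsub hc ht).trans
      (gronwallBound_le_mul_exp hA hMh t)
  have hf : ∀ t > (0:ℝ), 0 ≤ c t →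
      exp (-ρ * t) * u (c t) ≤ C * exp (-ε * t) * (1 + exp (-A * t) * c t) := by
    intro t ht hct
    have hcut := huconc.le_add_div_mul humono hu0 (exp_pos (A * t)) hct
    have hdisc : exp (-ρ * t) * u (exp (A * t)) ≤ C * exp (-ε * t) := by
      have := hubound t ht.le
      rw [mul_assoc, ← le_div_iff₀' (exp_pos _), div_eq_mul_inv, ← exp_neg] at this
      simpa [mul_comm] using this
    have hexpA : u (exp (A * t)) / exp (A * t) = u (exp (A * t)) * exp (-A * t) := by
      rw [div_eq_mul_inv, ← exp_neg, neg_mul]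
    calc exp (-ρ * t) * u (c t)
        ≤ exp (-ρ * t) * (u (exp (A * t)) + u (exp (A * t)) / exp (A * t) * c t) := by gcongr
      _ = exp (-ρ * t) * u (exp (A * t)) * (1 + exp (-A * t) * c t) := by rw [hexpA]; ring
      _ ≤ C * exp (-ε * t) * (1 + exp (-A * t) * c t) := by gcongr
  have hbound : 0 ≤ C * (1 + (k₀ + Mh / A) * exp A) / (1 - exp (-ε)) := by
    have hB : 0 ≤ k₀ + Mh / A := add_nonneg hk₀ (div_nonneg hMh hA.le)
    have hr : 0 < 1 - exp (-ε) := sub_pos.mpr (exp_lt_one_iff.mpr (neg_lt_zero.mpr hε))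
    exact div_nonneg (mul_nonneg hC (add_nonneg zero_le_one (mul_nonneg hB (exp_pos A).le)))
      hr.le
  obtain ⟨hcint, hc0, -⟩ := hc
  refine integral_le_of_lintegral_ofReal_le ?_ hbound
    (lintegral_Ioi_ofReal_le_of_exp_growth hA.le hε hC hcint hc0 hcB hf)
  filter_upwards [ae_restrict_of_ae_restrict_of_subset Ioi_subset_Ici_self hc0] with t ht
  exact mul_nonneg (exp_pos _).le (hu_nonneg _ ht)

theorem adm_const {F : ℝ → ℝ} {k₀ : ℝ} (hk₀ : 0 ≤ k₀) (hF : 0 ≤ F k₀) :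
    Adm F k₀ (fun _ => F k₀) :=
  ⟨(locallyIntegrable_const _).locallyIntegrableOn _, Eventually.of_forall fun _ => hF,
    fun _ => k₀, ⟨continuousOn_const, rfl, fun t _ => by simp⟩, fun _ _ => hk₀⟩

theorem util_const {ρ : ℝ} (hρ : 0 < ρ) (u : ℝ → ℝ) (x : ℝ) :
    Util ρ u (fun _ => x) = u x / ρ := by
  rw [Util, integral_mul_const, integral_exp_mul_Ioi (neg_lt_zero.mpr hρ)]
  field_simp
  simp

theorem stmt11_general (F u : ℝ → ℝ) (ρ L ε₀ Mh : ℝ)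
    (hρ : 0 < ρ) (hL : 0 < L) (hε₀ : 0 < ε₀) (hMh : 0 < Mh)
    (hFmono : StrictMonoOn F (Set.Ici 0)) (hF0 : F 0 = 0)
    (hFsub : ∀ x ≥ (0:ℝ), F x ≤ (L + ε₀) * x + Mh)
    (hFtop : Filter.Tendsto F Filter.atTop Filter.atTop)
    (humono : StrictMonoOn u (Set.Ici 0))
    (huconc : ConcaveOn ℝ (Set.Ici 0) u) (hu0 : u 0 = 0)
    (hulim : Filter.Tendsto u Filter.atTop Filter.atTop)
    (hexp : Filter.Tendsto
      (fun t => Real.exp (ε₀ * t) * Real.exp (-ρ * t) * u (Real.exp ((L + ε₀) * t)))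
      Filter.atTop (nhds 0)) :
    (∀ k₀ ≥ (0:ℝ), BddAbove {x | ∃ c, Adm F k₀ c ∧ Util ρ u c = x}) ∧
    (∀ k₀ ≥ (0:ℝ), u (F k₀) / ρ ≤ Val F ρ u k₀) ∧
    Filter.Tendsto (Val F ρ u) Filter.atTop Filter.atTop := by
  have hA : 0 < L + ε₀ := by positivity
  have humono' := humono.monotoneOn
  obtain ⟨C, hC, hubound⟩ := exists_discounted_utility_le hρ.le hε₀.le hA.le humono'
    (fun x hx => hu0 ▸ humono' self_mem_Ici hx hx) hexp
  have hbdd : ∀ k₀ ≥ (0:ℝ), BddAbove {x | ∃ c, Adm F k₀ c ∧ Util ρ u c = x} := by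
    rintro k₀ -
    refine ⟨C * (1 + (k₀ + Mh / (L + ε₀)) * exp (L + ε₀)) / (1 - exp (-ε₀)), ?_⟩
    rintro _ ⟨c, hc, rfl⟩
    exact util_le_of_adm hA hε₀ hMh.le hC hFmono.monotoneOn hFsub huconc humono' hu0 hubound hc
  have hlow : ∀ k₀ ≥ (0:ℝ), u (F k₀) / ρ ≤ Val F ρ u k₀ := fun k₀ hk₀ =>
    le_csSup (hbdd k₀ hk₀) ⟨_, adm_const hk₀ (hF0 ▸ hFmono.monotoneOn self_mem_Ici hk₀ hk₀),
      util_const hρ u (F k₀)⟩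
  refine ⟨hbdd, hlow, tendsto_atTop_mono' atTop ?_ ((hulim.comp hFtop).atTop_div_const hρ)⟩
  filter_upwards [eventually_ge_atTop 0] with k hk using hlow k hk

theorem stmt11 (F u : ℝ → ℝ) (ρ L ε₀ Mh : ℝ)
    (hρ : 0 < ρ) (hL : 0 < L) (hε₀ : 0 < ε₀) (hMh : 0 < Mh)
    (hFmono : StrictMonoOn F (Set.Ici 0)) (hF0 : F 0 = 0)
    (hFsub : ∀ x ≥ (0:ℝ), F x ≤ (L + ε₀) * x + Mh)
    (hFtop : Filter.Tendsto F Filter.atTop Filter.atTop)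
    (hucont : ContinuousOn u (Set.Ici 0)) (humono : StrictMonoOn u (Set.Ici 0))
    (huconc : ConcaveOn ℝ (Set.Ici 0) u) (hu0 : u 0 = 0)
    (hulim : Filter.Tendsto u Filter.atTop Filter.atTop)
    (hexp : Filter.Tendsto
      (fun t => Real.exp (ε₀ * t) * Real.exp (-ρ * t) * u (Real.exp ((L + ε₀) * t)))
      Filter.atTop (nhds 0)) :
    (∀ k₀ ≥ (0:ℝ), BddAbove {x | ∃ c, Adm F k₀ c ∧ Util ρ u c = x}) ∧
    (∀ k₀ ≥ (0:ℝ), u (F k₀) / ρ ≤ Val F ρ u k₀) ∧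
    Filter.Tendsto (Val F ρ u) Filter.atTop Filter.atTop :=
  stmt11_general F u ρ L ε₀ Mh hρ hL hε₀ hMh hFmono hF0 hFsub hFtop humono huconc hu0 hulim hexp
end
end

section
/- Under the standing assumptions, the value function V satisfies lim_{k→∞} V(k)/k = 0. -/
open MeasureTheory

noncomputable section

open Set Filter

/-!
Along an admissible path, capital plus cumulative consumption grows at most through the affine
bound `F x ≤ a x + Mh`, `a = L + ε₀`, so Grönwall's inequality gives `∫₀ᵗ c ≤ K e^{a t}` with
`K = k₀ + Mh / a`. Below the concave `u` lies the chord bound `u c ≤ u x + (u x / x) c`, taken at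
`x = K e^{a t}`; integrating its linear term by parts against the cumulative consumption (Tonelli)
bounds the utility of every admissible `c` by `(1 + ρ + a) U(K)`, where `U(K)` is the utility of the
path `K e^{a t}`. Finally `U(K) / K → 0` by dominated convergence: `u x / x → 0`, and
`u (K x) ≤ K u x` for `K ≥ 1` provides the majorant `e^{-ρ t} u(e^{a t})`, integrable because
`t e^{-ρ t} u(e^{a t})` is.
-/

open Set Filter Real
open scoped ENNReal Topology Interval

section MonotoneConcave

variable {u : ℝ → ℝ}

lemma nonneg_of_monotoneOn_Ici (hmono : MonotoneOn u (Ici 0)) (hu0 : u 0 = 0) {x : ℝ}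
    (hx : 0 ≤ x) : 0 ≤ u x :=
  hu0 ▸ hmono self_mem_Ici hx hx

lemma aemeasurable_comp_of_monotoneOn_Ici {α : Type*} [MeasurableSpace α] {μ : Measure α}
    {g : α → ℝ} (hmono : MonotoneOn u (Ici 0)) (hg : AEMeasurable g μ) (hg0 : ∀ᵐ x ∂μ, 0 ≤ g x) :
    AEMeasurable (fun x => u (g x)) μ := by
  have hext : Monotone fun x => u (max x 0) := fun x y hxy =>
    hmono (le_max_right x 0) (le_max_right y 0) (max_le_max_right 0 hxy)
  refine (hext.measurable.comp_aemeasurable hg).congr ?_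
  filter_upwards [hg0] with x hx
  simp [max_eq_left hx]

lemma ConcaveOn.antitoneOn_div_self (hconc : ConcaveOn ℝ (Ici 0) u) (hu0 : u 0 = 0) :
    AntitoneOn (fun x => u x / x) (Ioi 0) := fun x hx y hy hxy => by
  simpa [slope_def_field, hu0] using
    hconc.antitoneOn_slope_gt self_mem_Ici ⟨mem_Ici.2 (le_of_lt hx), hx⟩
      ⟨mem_Ici.2 (le_of_lt hy), hy⟩ hxy

lemma ConcaveOn.map_mul_le (hconc : ConcaveOn ℝ (Ici 0) u) (hu0 : u 0 = 0) {K x : ℝ}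
    (hK : 1 ≤ K) (hx : 0 < x) : u (K * x) ≤ K * u x := by
  have hKx : 0 < K * x := by positivity
  calc u (K * x) = K * x * (u (K * x) / (K * x)) := by field_simp
    _ ≤ K * x * (u x / x) := mul_le_mul_of_nonneg_left
      (hconc.antitoneOn_div_self hu0 hx hKx (le_mul_of_one_le_left hx.le hK)) hKx.le
    _ = K * u x := by field_simp

lemma ConcaveOn.map_le_add_div_mul (hconc : ConcaveOn ℝ (Ici 0) u) (hmono : MonotoneOn u (Ici 0))
    (hu0 : u 0 = 0) {x c : ℝ} (hx : 0 < x) (hc : 0 ≤ c) : u c ≤ u x + u x / x * c := by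
  have hux : 0 ≤ u x := nonneg_of_monotoneOn_Ici hmono hu0 hx.le
  rcases le_or_gt c x with hcx | hxc
  · have : 0 ≤ u x / x * c := by positivity
    linarith [hmono hc hx.le hcx]
  · have h := hconc.antitoneOn_div_self hu0 hx (hx.trans hxc) hxc.le
    rw [div_le_iff₀ (hx.trans hxc)] at h
    linarith

end MonotoneConcave

section Accumulation

variable {F k c : ℝ → ℝ} {k₀ a M : ℝ}

lemma intervalIntegrable_comp_of_monotoneOn_Ici (hFmono : MonotoneOn F (Ici 0)) (hF0 : F 0 = 0)
    (hFle : ∀ x ≥ (0:ℝ), F x ≤ a * x + M) (hk : ContinuousOn k (Ici 0))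
    (hk0 : ∀ t ≥ (0:ℝ), 0 ≤ k t) {t : ℝ} (ht : 0 ≤ t) :
    IntervalIntegrable (fun s => F (k s)) volume 0 t := by
  have hkt : ContinuousOn k (uIcc 0 t) := hk.mono (by simp [uIcc_of_le ht, Icc_subset_Ici_self])
  have hpos : ∀ s ∈ Ι 0 t, 0 ≤ k s := fun s hs => hk0 s (by simp [uIoc_of_le ht] at hs; linarith)
  refine ((hkt.intervalIntegrable.const_mul a).add (intervalIntegrable_const (c := M))).mono_fun'
    ?_ ?_
  · refine (aemeasurable_comp_of_monotoneOn_Ici hFmono ?_ ?_).aestronglyMeasurable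
    · exact (hkt.mono uIoc_subset_uIcc).aemeasurable measurableSet_uIoc
    · exact ae_restrict_of_forall_mem measurableSet_uIoc hpos
  · refine ae_restrict_of_forall_mem measurableSet_uIoc fun s hs => ?_
    have hFk : 0 ≤ F (k s) := hF0 ▸ hFmono self_mem_Ici (hpos s hs) (hpos s hs)
    simpa [abs_of_nonneg hFk] using hFle _ (hpos s hs)

lemma SolOn.add_integral_le (hsol : SolOn F k₀ c k) (hk0 : ∀ t ≥ (0:ℝ), 0 ≤ k t)
    (hc : LocallyIntegrableOn c (Ici 0)) (hFmono : MonotoneOn F (Ici 0)) (hF0 : F 0 = 0)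
    (hFle : ∀ x ≥ (0:ℝ), F x ≤ a * x + M) {t : ℝ} (ht : 0 ≤ t) :
    k t + ∫ s in (0:ℝ)..t, c s ≤ k₀ + ∫ s in (0:ℝ)..t, (a * k s + M) := by
  obtain ⟨hk, -, hkeq⟩ := hsol
  have hFk := intervalIntegrable_comp_of_monotoneOn_Ici hFmono hF0 hFle hk hk0 ht
  have hct : IntervalIntegrable c volume 0 t :=
    (hc.integrableOn_compact_subset (by simp [uIcc_of_le ht, Icc_subset_Ici_self])
      isCompact_uIcc).intervalIntegrable
  have hkt : ContinuousOn k (uIcc 0 t) := hk.mono (by simp [uIcc_of_le ht, Icc_subset_Ici_self])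
  have hmono : ∫ s in (0:ℝ)..t, F (k s) ≤ ∫ s in (0:ℝ)..t, (a * k s + M) :=
    intervalIntegral.integral_mono_on ht hFk
      ((hkt.intervalIntegrable.const_mul a).add (intervalIntegrable_const (c := M)))
      fun s hs => hFle _ (hk0 s hs.1)
  rw [hkeq t ht, intervalIntegral.integral_sub hFk hct]
  linarith

lemma Adm.integral_le_mul_exp (hadm : Adm F k₀ c) (ha : 0 < a) (hFmono : MonotoneOn F (Ici 0))
    (hF0 : F 0 = 0) (hFle : ∀ x ≥ (0:ℝ), F x ≤ a * x + M) {t : ℝ} (ht : 0 ≤ t) :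
    ∫ s in (0:ℝ)..t, c s ≤ (k₀ + M / a) * exp (a * t) := by
  obtain ⟨hc, hc0, k, hsol, hk0⟩ := hadm
  have hM : 0 ≤ M := by simpa [hF0] using hFle 0 le_rfl
  have hcum : ∀ t ≥ (0:ℝ), 0 ≤ ∫ s in (0:ℝ)..t, c s := fun t ht =>
    intervalIntegral.integral_nonneg_of_ae_restrict ht
      (ae_restrict_of_ae_restrict_of_subset Icc_subset_Ici_self hc0)
  have hg : ContinuousOn (fun s => a * k s + M) (Ici 0) :=
    (continuousOn_const.mul hsol.1).add continuousOn_const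
  set Ψ : ℝ → ℝ := fun t => k₀ + ∫ s in (0:ℝ)..t, (a * k s + M)
  have hkΨ : ∀ x ≥ (0:ℝ), k x ≤ Ψ x := fun x hx => by
    linarith [hsol.add_integral_le hk0 hc hFmono hF0 hFle hx, hcum x hx]
  have hderiv : ∀ x ≥ (0:ℝ), HasDerivWithinAt Ψ (a * k x + M) (Ici x) x := fun x hx =>
    (intervalIntegral.integral_hasDerivWithinAt_right
      ((hg.mono (by simp [uIcc_of_le hx, Icc_subset_Ici_self])).intervalIntegrable)
      ((hg.mono fun y hy => le_trans hx (le_of_lt hy)).stronglyMeasurableAtFilter_nhdsWithin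
        measurableSet_Ioi x)
      ((hg x hx).mono fun y hy => le_trans hx (le_of_lt hy))).const_add k₀
  have hΨ : Ψ t ≤ gronwallBound k₀ a M t := by
    have hcont : ContinuousOn Ψ (Icc 0 t) := by
      have := intervalIntegral.continuousOn_primitive_interval (μ := volume) (a := 0) (b := t)
        ((hg.mono (by simp [uIcc_of_le ht, Icc_subset_Ici_self])).integrableOn_compact
          isCompact_uIcc)
      rw [uIcc_of_le ht] at this
      exact continuousOn_const.add this
    simpa using le_gronwallBound_of_liminf_deriv_right_le hcont
      (fun x hx _ hr => (hderiv x hx.1).liminf_right_slope_le hr) (by simp [Ψ])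
      (fun x hx => by nlinarith [hkΨ x hx.1]) t ⟨ht, le_rfl⟩
  rw [gronwallBound_of_K_ne_0 ha.ne'] at hΨ
  have : 0 ≤ M / a := div_nonneg hM ha.le
  nlinarith [hsol.add_integral_le hk0 hc hFmono hF0 hFle ht, hk0 t ht]

end Accumulation

/-- Tonelli's theorem, used as an integration by parts against the cumulative integral of `c`. -/
lemma lintegral_mul_le_lintegral_mul_cumulative {w φ c : ℝ → ℝ≥0∞}
    (hφ : AEMeasurable φ (volume.restrict (Ioi 0))) (hc : AEMeasurable c (volume.restrict (Ioi 0)))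
    (hw : ∀ t > 0, w t ≤ ∫⁻ s in Ioi t, φ s) :
    ∫⁻ t in Ioi 0, w t * c t ≤ ∫⁻ s in Ioi 0, φ s * ∫⁻ t in Ioo 0 s, c t := by
  set G : ℝ × ℝ → ℝ≥0∞ := {p | p.1 < p.2}.indicator fun p => φ p.2 * c p.1
  have hG : AEMeasurable G ((volume.restrict (Ioi 0)).prod (volume.restrict (Ioi 0))) :=
    (hφ.comp_snd.mul hc.comp_fst).indicator (measurableSet_lt measurable_fst measurable_snd)
  calc ∫⁻ t in Ioi 0, w t * c t ≤ ∫⁻ t in Ioi 0, ∫⁻ s in Ioi 0, G (t, s) := by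
        refine setLIntegral_mono' measurableSet_Ioi fun t ht => ?_
        have hGt : (fun s => G (t, s)) = (Ioi t).indicator fun s => φ s * c t := by
          ext s; by_cases h : t < s <;> simp [G, h]
        rw [hGt, lintegral_indicator measurableSet_Ioi, Measure.restrict_restrict measurableSet_Ioi,
          Ioi_inter_Ioi, sup_eq_left.2 (le_of_lt ht)]
        exact (mul_le_mul_left (hw t ht) _).trans (lintegral_mul_const_le _ _)
    _ = ∫⁻ s in Ioi 0, ∫⁻ t in Ioi 0, G (t, s) := lintegral_lintegral_swap hG
    _ = ∫⁻ s in Ioi 0, φ s * ∫⁻ t in Ioo 0 s, c t := by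
        refine setLIntegral_congr_fun measurableSet_Ioi fun s hs => ?_
        have hGs : (fun t => G (t, s)) = (Iio s).indicator fun t => φ s * c t := by
          ext t; by_cases h : t < s <;> simp [G, h]
        rw [hGs, lintegral_indicator measurableSet_Iio, Measure.restrict_restrict measurableSet_Iio,
          Iio_inter_Ioi, lintegral_const_mul'' _ (hc.mono_measure (Measure.restrict_mono
            Ioo_subset_Ioi_self le_rfl))]

lemma integrableOn_Ioi_of_integrableOn_mul_self {f : ℝ → ℝ} {C : ℝ}
    (hf : AEStronglyMeasurable f (volume.restrict (Ioi 0))) (hC : ∀ t ∈ Ioc (0:ℝ) 1, ‖f t‖ ≤ C)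
    (hint : IntegrableOn (fun t => t * f t) (Ioi 0)) : IntegrableOn f (Ioi 0) := by
  rw [← Ioc_union_Ioi_eq_Ioi zero_le_one]
  refine IntegrableOn.union ?_ ?_
  · exact (integrableOn_const measure_Ioc_lt_top.ne).mono' (hf.mono_set Ioc_subset_Ioi_self)
      (ae_restrict_of_forall_mem measurableSet_Ioc hC)
  · refine Integrable.mono (hint.mono_set (Ioi_subset_Ioi zero_le_one))
      (hf.mono_set (Ioi_subset_Ioi zero_le_one)) (ae_restrict_of_forall_mem measurableSet_Ioi ?_)
    intro t (ht : 1 < t)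
    rw [norm_mul, Real.norm_of_nonneg (show (0:ℝ) ≤ t by linarith)]
    exact le_mul_of_one_le_left (norm_nonneg _) ht.le

lemma ofReal_exp_mul_le_lintegral_Ioi {g : ℝ → ℝ} {b t : ℝ} (hb : 0 < b)
    (hg : ∀ s ≥ t, g t ≤ g s) :
    ENNReal.ofReal (exp (-b * t) * g t) ≤
      ∫⁻ s in Ioi t, ENNReal.ofReal (b * exp (-b * s) * g s) := by
  have hexp : ∫⁻ s in Ioi t, ENNReal.ofReal (b * exp (-b * s)) = ENNReal.ofReal (exp (-b * t)) := by
    rw [← ofReal_integral_eq_lintegral_ofReal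
      ((integrableOn_exp_mul_Ioi (neg_lt_zero.2 hb) t).const_mul b)
      (Eventually.of_forall fun s => by positivity), integral_const_mul,
      integral_exp_mul_Ioi (neg_lt_zero.2 hb)]
    congr 1
    field_simp
  calc ENNReal.ofReal (exp (-b * t) * g t)
      = (∫⁻ s in Ioi t, ENNReal.ofReal (b * exp (-b * s))) * ENNReal.ofReal (g t) := by
        rw [hexp, ENNReal.ofReal_mul (exp_pos _).le]
    _ ≤ ∫⁻ s in Ioi t, ENNReal.ofReal (b * exp (-b * s)) * ENNReal.ofReal (g t) :=
        lintegral_mul_const_le _ _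
    _ ≤ ∫⁻ s in Ioi t, ENNReal.ofReal (b * exp (-b * s) * g s) := by
        refine setLIntegral_mono' measurableSet_Ioi fun s (hs : t < s) => ?_
        rw [← ENNReal.ofReal_mul (by positivity)]
        exact ENNReal.ofReal_le_ofReal (mul_le_mul_of_nonneg_left (hg s hs.le) (by positivity))

lemma exp_neg_add_mul_mul_exp (ρ a t : ℝ) : exp (-(ρ + a) * t) * exp (a * t) = exp (-ρ * t) := by
  rw [← exp_add]; ring_nf

section ExponentialPath

variable {u c : ℝ → ℝ} {ρ a K : ℝ}

lemma exp_mul_comp_exp_path_nonneg (hmono : MonotoneOn u (Ici 0)) (hu0 : u 0 = 0) (hK : 0 ≤ K)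
    (t : ℝ) : 0 ≤ exp (-ρ * t) * u (K * exp (a * t)) :=
  mul_nonneg (exp_pos _).le (nonneg_of_monotoneOn_Ici hmono hu0 (by positivity))

lemma aemeasurable_exp_mul_comp_exp_path {μ : Measure ℝ} (hmono : MonotoneOn u (Ici 0))
    (hK : 0 ≤ K) : AEMeasurable (fun t => exp (-ρ * t) * u (K * exp (a * t))) μ :=
  (by fun_prop : Measurable fun t => exp (-ρ * t)).aemeasurable.mul
    (aemeasurable_comp_of_monotoneOn_Ici hmono (by fun_prop) (ae_of_all _ fun t => by positivity))

lemma integrableOn_exp_mul_comp_exp_path (hρ : 0 ≤ ρ) (ha : 0 ≤ a)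
    (hmono : MonotoneOn u (Ici 0)) (hconc : ConcaveOn ℝ (Ici 0) u) (hu0 : u 0 = 0)
    (hint : IntegrableOn (fun t => t * exp (-ρ * t) * u (exp (a * t))) (Ioi 0)) (hK : 1 ≤ K) :
    IntegrableOn (fun t => exp (-ρ * t) * u (K * exp (a * t))) (Ioi 0) := by
  have hunit : IntegrableOn (fun t => exp (-ρ * t) * u (exp (a * t))) (Ioi 0) := by
    refine integrableOn_Ioi_of_integrableOn_mul_self (C := u (exp a)) ?_ ?_
      (by simpa only [mul_assoc] using hint)
    · simpa using (aemeasurable_exp_mul_comp_exp_path hmono zero_le_one (ρ := ρ) (a := a)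
        (μ := volume.restrict (Ioi 0))).aestronglyMeasurable
    · rintro t ⟨ht0, ht1⟩
      have hu : 0 ≤ u (exp (a * t)) := nonneg_of_monotoneOn_Ici hmono hu0 (exp_pos _).le
      have hut : u (exp (a * t)) ≤ u (exp a) :=
        hmono (exp_pos _).le (exp_pos _).le (exp_le_exp.2 (by nlinarith))
      have hexp : exp (-ρ * t) ≤ 1 := exp_le_one_iff.2 (by nlinarith)
      rw [Real.norm_of_nonneg (by positivity)]
      nlinarith [exp_pos (-ρ * t)]
  refine (hunit.const_mul K).mono'
    (aemeasurable_exp_mul_comp_exp_path hmono (by linarith)).aestronglyMeasurable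
    (ae_of_all _ fun t => ?_)
  have hu : 0 ≤ u (K * exp (a * t)) := nonneg_of_monotoneOn_Ici hmono hu0 (by positivity)
  rw [Real.norm_of_nonneg (by positivity), mul_left_comm]
  exact mul_le_mul_of_nonneg_left (hconc.map_mul_le hu0 hK (exp_pos _)) (exp_pos _).le

lemma tendsto_util_exp_path_div (hρ : 0 ≤ ρ) (ha : 0 ≤ a)
    (hmono : MonotoneOn u (Ici 0)) (hconc : ConcaveOn ℝ (Ici 0) u) (hu0 : u 0 = 0)
    (husub : Tendsto (fun x => u x / x) atTop (𝓝 0))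
    (hint : IntegrableOn (fun t => t * exp (-ρ * t) * u (exp (a * t))) (Ioi 0)) :
    Tendsto (fun K => Util ρ u (fun t => K * exp (a * t)) / K) atTop (𝓝 0) := by
  simp only [Util, ← integral_div]
  rw [show 𝓝 (0:ℝ) = 𝓝 (∫ t in Ioi (0:ℝ), (0:ℝ)) by simp]
  refine tendsto_integral_filter_of_dominated_convergence
    (fun t => exp (-ρ * t) * u (1 * exp (a * t))) ?_ ?_
    (integrableOn_exp_mul_comp_exp_path hρ ha hmono hconc hu0 hint le_rfl) ?_
  · filter_upwards [eventually_ge_atTop 0] with K hK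
    exact ((aemeasurable_exp_mul_comp_exp_path hmono hK).div_const K).aestronglyMeasurable
  · filter_upwards [eventually_ge_atTop 1] with K hK
    refine ae_of_all _ fun t => ?_
    have hu : 0 ≤ u (K * exp (a * t)) :=
      nonneg_of_monotoneOn_Ici hmono hu0 (by nlinarith [exp_pos (a * t)])
    rw [Real.norm_of_nonneg (by positivity), one_mul, mul_div_assoc]
    refine mul_le_mul_of_nonneg_left ?_ (exp_pos _).le
    rw [div_le_iff₀' (by linarith)]
    exact hconc.map_mul_le hu0 hK (exp_pos _)
  · refine ae_of_all _ fun t => ?_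
    have hlim := (husub.comp (tendsto_id.atTop_mul_const (exp_pos (a * t)))).const_mul
      (exp (-ρ * t) * exp (a * t))
    rw [mul_zero] at hlim
    refine hlim.congr' ?_
    filter_upwards [eventually_gt_atTop 0] with K hK
    simp only [Function.comp_apply, id]
    field_simp

/-- The linear term of the chord bound at `x = K e^{a t}`, integrated against `c`. -/
lemma lintegral_weight_mul_le (hb : 0 < ρ + a) (ha : 0 ≤ a) (hK : 0 < K)
    (hmono : MonotoneOn u (Ici 0)) (hu0 : u 0 = 0)
    (hIu : IntegrableOn (fun t => exp (-ρ * t) * u (K * exp (a * t))) (Ioi 0))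
    (hc : LocallyIntegrableOn c (Ici 0)) (hc0 : ∀ᵐ t ∂(volume.restrict (Ici 0)), 0 ≤ c t)
    (hC : ∀ s ≥ (0:ℝ), ∫ t in (0:ℝ)..s, c t ≤ K * exp (a * s)) :
    ∫⁻ t in Ioi 0, ENNReal.ofReal (exp (-(ρ + a) * t) * (u (K * exp (a * t)) / K) * c t) ≤
      ENNReal.ofReal ((ρ + a) * Util ρ u (fun t => K * exp (a * t))) := by
  set g : ℝ → ℝ := fun t => u (K * exp (a * t)) / K
  have hg0 : ∀ t, 0 ≤ g t := fun t =>
    div_nonneg (nonneg_of_monotoneOn_Ici hmono hu0 (by positivity)) hK.le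
  have hgmono : Monotone g := fun s t hst => div_le_div_of_nonneg_right
    (hmono (mem_Ici.2 (by positivity)) (mem_Ici.2 (by positivity)) (by gcongr)) hK.le
  have hcm : AEMeasurable c (volume.restrict (Ioi 0)) :=
    (hc.aestronglyMeasurable.mono_measure
      (Measure.restrict_mono Ioi_subset_Ici_self le_rfl)).aemeasurable
  have hcum : ∀ s > (0:ℝ), ∫⁻ t in Ioo 0 s, ENNReal.ofReal (c t) ≤
      ENNReal.ofReal (K * exp (a * s)) := fun s hs => by
    have hsub : Ioo 0 s ⊆ Ici (0:ℝ) := Ioo_subset_Icc_self.trans Icc_subset_Ici_self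
    rw [← ofReal_integral_eq_lintegral_ofReal
      ((hc.integrableOn_compact_subset Icc_subset_Ici_self isCompact_Icc).mono_set
        Ioo_subset_Icc_self) (ae_restrict_of_ae_restrict_of_subset hsub hc0),
      ← integral_Ioc_eq_integral_Ioo, ← intervalIntegral.integral_of_le hs.le]
    exact ENNReal.ofReal_le_ofReal (hC s hs.le)
  have hφm : AEMeasurable (fun s => ENNReal.ofReal ((ρ + a) * exp (-(ρ + a) * s) * g s))
      (volume.restrict (Ioi 0)) :=
    ((by fun_prop : Measurable fun s => (ρ + a) * exp (-(ρ + a) * s)).mul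
      hgmono.measurable).ennreal_ofReal.aemeasurable
  calc ∫⁻ t in Ioi 0, ENNReal.ofReal (exp (-(ρ + a) * t) * g t * c t)
      = ∫⁻ t in Ioi 0, ENNReal.ofReal (exp (-(ρ + a) * t) * g t) * ENNReal.ofReal (c t) :=
        lintegral_congr fun t => ENNReal.ofReal_mul (mul_nonneg (exp_pos _).le (hg0 t))
    _ ≤ ∫⁻ s in Ioi 0, ENNReal.ofReal ((ρ + a) * exp (-(ρ + a) * s) * g s) *
          ∫⁻ t in Ioo 0 s, ENNReal.ofReal (c t) :=
        lintegral_mul_le_lintegral_mul_cumulative hφm hcm.ennreal_ofReal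
          fun t _ => ofReal_exp_mul_le_lintegral_Ioi hb fun s hs => hgmono hs
    _ ≤ ∫⁻ s in Ioi 0, ENNReal.ofReal ((ρ + a) * exp (-(ρ + a) * s) * g s) *
          ENNReal.ofReal (K * exp (a * s)) :=
        setLIntegral_mono' measurableSet_Ioi fun s hs => by gcongr; exact hcum s hs
    _ = ∫⁻ s in Ioi 0, ENNReal.ofReal ((ρ + a) * (exp (-ρ * s) * u (K * exp (a * s)))) := by
        refine lintegral_congr fun s => ?_
        rw [← ENNReal.ofReal_mul (by have := hg0 s; positivity)]
        congr 1
        rw [← exp_neg_add_mul_mul_exp ρ a s]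
        simp only [g]
        field_simp
    _ = ENNReal.ofReal ((ρ + a) * Util ρ u (fun t => K * exp (a * t))) := by
        rw [← ofReal_integral_eq_lintegral_ofReal (hIu.const_mul _)
          (ae_of_all _ fun s => mul_nonneg hb.le (exp_mul_comp_exp_path_nonneg hmono hu0 hK.le s)),
          integral_const_mul]
        rfl

lemma util_le_of_integral_le_mul_exp (hb : 0 < ρ + a) (ha : 0 ≤ a) (hK : 0 < K)
    (hmono : MonotoneOn u (Ici 0)) (hconc : ConcaveOn ℝ (Ici 0) u) (hu0 : u 0 = 0)
    (hIu : IntegrableOn (fun t => exp (-ρ * t) * u (K * exp (a * t))) (Ioi 0))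
    (hc : LocallyIntegrableOn c (Ici 0)) (hc0 : ∀ᵐ t ∂(volume.restrict (Ici 0)), 0 ≤ c t)
    (hC : ∀ s ≥ (0:ℝ), ∫ t in (0:ℝ)..s, c t ≤ K * exp (a * s)) :
    Util ρ u c ≤ (1 + (ρ + a)) * Util ρ u (fun t => K * exp (a * t)) := by
  have hIu0 : 0 ≤ Util ρ u (fun t => K * exp (a * t)) :=
    integral_nonneg (exp_mul_comp_exp_path_nonneg hmono hu0 hK.le)
  have hc0' : ∀ᵐ t ∂(volume.restrict (Ioi 0)), 0 ≤ c t :=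
    ae_restrict_of_ae_restrict_of_subset Ioi_subset_Ici_self hc0
  have hf0 : 0 ≤ᵐ[volume.restrict (Ioi 0)] fun t => exp (-ρ * t) * u (c t) := by
    filter_upwards [hc0'] with t ht
    have := nonneg_of_monotoneOn_Ici hmono hu0 ht
    positivity
  have hfm : AEStronglyMeasurable (fun t => exp (-ρ * t) * u (c t)) (volume.restrict (Ioi 0)) :=
    ((by fun_prop : Measurable fun t => exp (-ρ * t)).aemeasurable.mul
      (aemeasurable_comp_of_monotoneOn_Ici hmono (hc.aestronglyMeasurable.mono_measure
        (Measure.restrict_mono Ioi_subset_Ici_self le_rfl)).aemeasurable hc0')).aestronglyMeasurable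
  have hchord : ∀ᵐ t ∂(volume.restrict (Ioi 0)), ENNReal.ofReal (exp (-ρ * t) * u (c t)) ≤
      ENNReal.ofReal (exp (-ρ * t) * u (K * exp (a * t))) +
        ENNReal.ofReal (exp (-(ρ + a) * t) * (u (K * exp (a * t)) / K) * c t) := by
    filter_upwards [hc0'] with t ht
    have hx : 0 < K * exp (a * t) := by positivity
    have hux := nonneg_of_monotoneOn_Ici hmono hu0 hx.le
    rw [← ENNReal.ofReal_add (exp_mul_comp_exp_path_nonneg hmono hu0 hK.le t) (by positivity)]
    refine ENNReal.ofReal_le_ofReal ?_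
    calc exp (-ρ * t) * u (c t)
        ≤ exp (-ρ * t) * (u (K * exp (a * t)) + u (K * exp (a * t)) / (K * exp (a * t)) * c t) :=
          mul_le_mul_of_nonneg_left (hconc.map_le_add_div_mul hmono hu0 hx ht) (exp_pos _).le
      _ = _ := by
          rw [← exp_neg_add_mul_mul_exp ρ a t]
          field_simp
  rw [Util, integral_eq_lintegral_of_nonneg_ae hf0 hfm]
  refine ENNReal.toReal_le_of_le_ofReal (by positivity) ?_
  calc ∫⁻ t in Ioi 0, ENNReal.ofReal (exp (-ρ * t) * u (c t))
      ≤ ∫⁻ t in Ioi 0, (ENNReal.ofReal (exp (-ρ * t) * u (K * exp (a * t))) +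
          ENNReal.ofReal (exp (-(ρ + a) * t) * (u (K * exp (a * t)) / K) * c t)) :=
        lintegral_mono_ae hchord
    _ = ENNReal.ofReal (Util ρ u (fun t => K * exp (a * t))) +
          ∫⁻ t in Ioi 0, ENNReal.ofReal (exp (-(ρ + a) * t) * (u (K * exp (a * t)) / K) * c t) := by
        rw [lintegral_add_left' hIu.aemeasurable.ennreal_ofReal, Util,
          ofReal_integral_eq_lintegral_ofReal hIu
          (ae_of_all _ (exp_mul_comp_exp_path_nonneg hmono hu0 hK.le))]
    _ ≤ ENNReal.ofReal (Util ρ u (fun t => K * exp (a * t))) +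
          ENNReal.ofReal ((ρ + a) * Util ρ u (fun t => K * exp (a * t))) := by
        gcongr
        exact lintegral_weight_mul_le hb ha hK hmono hu0 hIu hc hc0 hC
    _ = ENNReal.ofReal ((1 + (ρ + a)) * Util ρ u (fun t => K * exp (a * t))) := by
        rw [← ENNReal.ofReal_add hIu0 (by positivity)]
        ring_nf

end ExponentialPath

lemma tendsto_add_const_div_self (M : ℝ) : Tendsto (fun k => (k + M) / k) atTop (𝓝 1) := by
  have h := tendsto_const_nhds (x := (1:ℝ)).add (tendsto_const_nhds (x := M).div_atTop tendsto_id)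
  rw [add_zero] at h
  refine h.congr' ?_
  filter_upwards [eventually_gt_atTop 0] with k hk
  simp only [id]
  field_simp

section Value

variable {F u : ℝ → ℝ} {ρ a M k₀ : ℝ}

lemma val_nonneg (hmono : MonotoneOn u (Ici 0)) (hu0 : u 0 = 0) (k₀ : ℝ) : 0 ≤ Val F ρ u k₀ := by
  refine Real.sSup_nonneg fun _ ⟨c, hc, hcU⟩ => hcU ▸ integral_nonneg_of_ae ?_
  filter_upwards [ae_restrict_of_ae_restrict_of_subset Ioi_subset_Ici_self hc.2.1] with t ht
  exact mul_nonneg (exp_pos _).le (nonneg_of_monotoneOn_Ici hmono hu0 ht)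

lemma val_le_mul_util_exp_path (hρ : 0 < ρ) (ha : 0 < a) (hFmono : MonotoneOn F (Ici 0))
    (hF0 : F 0 = 0) (hFle : ∀ x ≥ (0:ℝ), F x ≤ a * x + M) (hmono : MonotoneOn u (Ici 0))
    (hconc : ConcaveOn ℝ (Ici 0) u) (hu0 : u 0 = 0)
    (hint : IntegrableOn (fun t => t * exp (-ρ * t) * u (exp (a * t))) (Ioi 0)) (hk₀ : 1 ≤ k₀) :
    Val F ρ u k₀ ≤ (1 + (ρ + a)) * Util ρ u (fun t => (k₀ + M / a) * exp (a * t)) := by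
  have hK : 1 ≤ k₀ + M / a :=
    le_add_of_le_of_nonneg hk₀ (div_nonneg (by simpa [hF0] using hFle 0 le_rfl) ha.le)
  have hIu := integrableOn_exp_mul_comp_exp_path hρ.le ha.le hmono hconc hu0 hint hK
  refine Real.sSup_le (fun _ ⟨c, hc, hcU⟩ => hcU ▸ ?_) ?_
  · exact util_le_of_integral_le_mul_exp (by linarith) ha.le (by linarith) hmono hconc hu0 hIu hc.1 hc.2.1
      fun s hs => hc.integral_le_mul_exp ha hFmono hF0 hFle hs
  · exact mul_nonneg (by positivity)
      (integral_nonneg (exp_mul_comp_exp_path_nonneg hmono hu0 (by linarith)))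

end Value

theorem stmt13_general (F u : ℝ → ℝ) (ρ L ε₀ Mh : ℝ)
    (hρ : 0 < ρ) (hL : 0 < L) (hε₀ : 0 < ε₀)
    (hFmono : StrictMonoOn F (Set.Ici 0)) (hF0 : F 0 = 0)
    (hFsub : ∀ x ≥ (0:ℝ), F x ≤ (L + ε₀) * x + Mh)
    (humono : StrictMonoOn u (Set.Ici 0))
    (huconc : ConcaveOn ℝ (Set.Ici 0) u) (hu0 : u 0 = 0)
    (husub : Filter.Tendsto (fun x => u x / x) Filter.atTop (nhds 0))
    (hint : IntegrableOn
      (fun t => t * Real.exp (-ρ * t) * u (Real.exp ((L + ε₀) * t))) (Set.Ioi 0)) :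
    Filter.Tendsto (fun k => Val F ρ u k / k) Filter.atTop (nhds 0) := by
  set a := L + ε₀
  have ha : 0 < a := add_pos hL hε₀
  set M := Mh / a
  have hM : 0 ≤ M := div_nonneg (by simpa [hF0] using hFsub 0 le_rfl) ha.le
  set U : ℝ → ℝ := fun K => Util ρ u (fun t => K * exp (a * t))
  have hU : Tendsto (fun k => (1 + (ρ + a)) * (U (k + M) / (k + M) * ((k + M) / k)))
      atTop (𝓝 0) := by
    simpa using (((tendsto_util_exp_path_div hρ.le ha.le humono.monotoneOn huconc hu0 husub
      hint).comp (tendsto_atTop_add_const_right _ M tendsto_id)).mul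
      (tendsto_add_const_div_self M)).const_mul (1 + (ρ + a))
  refine tendsto_of_tendsto_of_tendsto_of_le_of_le' tendsto_const_nhds hU ?_ ?_
  · filter_upwards [eventually_gt_atTop 0] with k hk
    exact div_nonneg (val_nonneg humono.monotoneOn hu0 k) hk.le
  · filter_upwards [eventually_ge_atTop 1] with k hk
    rw [div_mul_div_cancel₀ (by linarith), ← mul_div_assoc]
    exact div_le_div_of_nonneg_right (val_le_mul_util_exp_path hρ ha hFmono.monotoneOn hF0 hFsub
      humono.monotoneOn huconc hu0 hint hk) (by linarith)

theorem stmt13 (F u : ℝ → ℝ) (ρ L ε₀ Mh : ℝ)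
    (hρ : 0 < ρ) (hL : 0 < L) (hε₀ : 0 < ε₀) (hMh : 0 < Mh)
    (hFmono : StrictMonoOn F (Set.Ici 0)) (hF0 : F 0 = 0)
    (hFsub : ∀ x ≥ (0:ℝ), F x ≤ (L + ε₀) * x + Mh)
    (hFlin : Filter.Tendsto (fun x => F x / x) Filter.atTop (nhds L))
    (hucont : ContinuousOn u (Set.Ici 0)) (humono : StrictMonoOn u (Set.Ici 0))
    (huconc : ConcaveOn ℝ (Set.Ici 0) u) (hu0 : u 0 = 0)
    (hulim : Filter.Tendsto u Filter.atTop Filter.atTop)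
    (husub : Filter.Tendsto (fun x => u x / x) Filter.atTop (nhds 0))
    (hint : IntegrableOn
      (fun t => t * Real.exp (-ρ * t) * u (Real.exp ((L + ε₀) * t))) (Set.Ioi 0)) :
    Filter.Tendsto (fun k => Val F ρ u k / k) Filter.atTop (nhds 0) :=
  stmt13_general F u ρ L ε₀ Mh hρ hL hε₀ hFmono hF0 hFsub humono huconc hu0 husub hint
end
end
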